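/- Let k be a commutative ring, A a unital k-algebra, and (C_r)_{r≥0} a unital formal associative deformation of A. Let T : ℕ → End_k(A) with T(0) = id and T(r)(1) = 0 for all r ≥ 1, and let S : ℕ → End_k(A) be its convolution inverse (S(0) = id and ∑_{i+j=n} T(i) ∘ S(j) = 0 = ∑_{i+j=n} S(i) ∘ T(j) for n ≥ 1). Define C'_n(a, b) := ∑_{i+j+l+m=n} S(i)(C_j(T(l)(a), T(m)(b))). Then (C'_r)_{r≥0} is again a unital formal associative deformation of A with the same zeroth-order term: C'₀(a, b) = a·b, the order-by-order associativity conditions hold for (C'_r), and C'_r(1, a) = 0 = C'_r(a, 1) for all r ≥ 1. -/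

import Mathlib

/-
The deformed product `(f ⋆ g)(n) = ∑_{i+j+l=n} C_i(f_j, g_l)` on sequences `ℕ → A` is associative
exactly when the order-wise associativity conditions hold, and `T`, `S` act on sequences as mutually
inverse operators. Since `f ⋆' g = S(Tf ⋆ Tg)`, the product `⋆'` is conjugate to `⋆` and hence
associative. For unitality, `T` fixes the constant sequence `1`, which is a two-sided unit for `⋆`,
so `C'_r(1, a)` is the `r`-th term of `S(Ta)`, which vanishes for `r ≥ 1`.
-/

open Finset

variable {k : Type*} [CommRing k] {A : Type*} [Ring A] [Algebra k A]

/-- The deformation transported along an equivalence transformation `T` with convolution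
inverse `S`:  `C'_n(a,b) := ∑_{i+j+l+m=n} S_i(C_j(T_l(a), T_m(b)))`, encoding
`f ⋆' g = T⁻¹(Tf ⋆ Tg)`. -/
def transported (C : ℕ → A →ₗ[k] A →ₗ[k] A) (T S : ℕ → A →ₗ[k] A) :
    ℕ → A → A → A :=
  fun n a b => ∑ p ∈ antidiagonal n, ∑ q ∈ antidiagonal p.2, ∑ r ∈ antidiagonal q.2,
    S p.1 (C q.1 (T r.1 a) (T r.2 b))

section Reindex

variable {M : Type*} [AddCommMonoid M]

theorem sum_antidiagonal_eq_fst_zero {n : ℕ} {F : ℕ × ℕ → M}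
    (hF : ∀ p ∈ antidiagonal n, p.1 ≠ 0 → F p = 0) :
    ∑ p ∈ antidiagonal n, F p = F (0, n) :=
  sum_eq_single_of_mem _ (by simp) fun p hp hne =>
    hF p hp fun h0 => hne ((HasAntidiagonal.antidiagonal_congr hp (by simp)).2 h0)

theorem sum_antidiagonal_eq_snd_zero {n : ℕ} {F : ℕ × ℕ → M}
    (hF : ∀ p ∈ antidiagonal n, p.2 ≠ 0 → F p = 0) :
    ∑ p ∈ antidiagonal n, F p = F (n, 0) :=
  sum_eq_single_of_mem _ (by simp) fun p hp hne =>
    hF p hp fun h0 => hne ((HasAntidiagonal.antidiagonal_congr' hp (by simp)).2 h0)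

theorem sum_antidiagonal_antidiagonal_assoc (n : ℕ) (F : ℕ → ℕ → ℕ → M) :
    ∑ p ∈ antidiagonal n, ∑ q ∈ antidiagonal p.2, F p.1 q.1 q.2 =
      ∑ p ∈ antidiagonal n, ∑ q ∈ antidiagonal p.1, F q.1 q.2 p.2 := by
  simp only [sum_sigma']
  refine sum_nbij' (fun x => ⟨(x.1.1 + x.2.1, x.2.2), (x.1.1, x.2.1)⟩)
    (fun x => ⟨(x.2.1, x.2.2 + x.1.2), (x.2.2, x.1.2)⟩) ?_ ?_ ?_ ?_ (fun _ _ => rfl) <;>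
  · rintro ⟨⟨_, _⟩, ⟨_, _⟩⟩ h
    simp only [mem_sigma, HasAntidiagonal.mem_antidiagonal, Sigma.mk.injEq, heq_eq_eq,
      Prod.mk.injEq, and_true, true_and] at h ⊢
    omega

-- The common normal form of both sides of `deformedMul_assoc`: the two indices of `C` innermost.
theorem sum_antidiagonal_reindex_mul_left (n : ℕ) (H : ℕ → ℕ → ℕ → ℕ → ℕ → M) :
    ∑ p ∈ antidiagonal n, ∑ q ∈ antidiagonal p.2, ∑ r ∈ antidiagonal q.1,
      ∑ s ∈ antidiagonal r.2, H p.1 r.1 s.1 s.2 q.2 =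
    ∑ w ∈ antidiagonal n, ∑ x ∈ antidiagonal w.2, ∑ y ∈ antidiagonal x.2,
      ∑ z ∈ antidiagonal w.1, H z.1 z.2 x.1 y.1 y.2 := by
  simp only [sum_sigma']
  refine sum_nbij'
    (fun a => ⟨(a.1.1 + a.2.2.1.1, a.2.2.2.1 + (a.2.2.2.2 + a.2.1.2)),
      (a.2.2.2.1, a.2.2.2.2 + a.2.1.2), (a.2.2.2.2, a.2.1.2), (a.1.1, a.2.2.1.1)⟩)
    (fun b => ⟨(b.2.2.2.1, b.2.2.2.2 + (b.2.1.1 + (b.2.2.1.1 + b.2.2.1.2))),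
      (b.2.2.2.2 + (b.2.1.1 + b.2.2.1.1), b.2.2.1.2),
      (b.2.2.2.2, b.2.1.1 + b.2.2.1.1), (b.2.1.1, b.2.2.1.1)⟩) ?_ ?_ ?_ ?_
    (fun _ _ => rfl) <;>
  · rintro ⟨⟨_, _⟩, ⟨_, _⟩, ⟨_, _⟩, ⟨_, _⟩⟩ h
    simp only [mem_sigma, HasAntidiagonal.mem_antidiagonal, Sigma.mk.injEq, heq_eq_eq,
      Prod.mk.injEq, and_true, true_and] at h ⊢
    omega

theorem sum_antidiagonal_reindex_mul_right (n : ℕ) (K : ℕ → ℕ → ℕ → ℕ → ℕ → M) :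
    ∑ p ∈ antidiagonal n, ∑ q ∈ antidiagonal p.2, ∑ r ∈ antidiagonal q.2,
      ∑ s ∈ antidiagonal r.2, K p.1 r.1 q.1 s.1 s.2 =
    ∑ w ∈ antidiagonal n, ∑ x ∈ antidiagonal w.2, ∑ y ∈ antidiagonal x.2,
      ∑ z ∈ antidiagonal w.1, K z.1 z.2 x.1 y.1 y.2 := by
  simp only [sum_sigma']
  refine sum_nbij'
    (fun a => ⟨(a.1.1 + a.2.2.1.1, a.2.1.1 + (a.2.2.2.1 + a.2.2.2.2)),
      (a.2.1.1, a.2.2.2.1 + a.2.2.2.2), (a.2.2.2.1, a.2.2.2.2), (a.1.1, a.2.2.1.1)⟩)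
    (fun b => ⟨(b.2.2.2.1, b.2.1.1 + (b.2.2.2.2 + (b.2.2.1.1 + b.2.2.1.2))),
      (b.2.1.1, b.2.2.2.2 + (b.2.2.1.1 + b.2.2.1.2)),
      (b.2.2.2.2, b.2.2.1.1 + b.2.2.1.2), (b.2.2.1.1, b.2.2.1.2)⟩) ?_ ?_ ?_ ?_
    (fun _ _ => rfl) <;>
  · rintro ⟨⟨_, _⟩, ⟨_, _⟩, ⟨_, _⟩, ⟨_, _⟩⟩ h
    simp only [mem_sigma, HasAntidiagonal.mem_antidiagonal, Sigma.mk.injEq, heq_eq_eq,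
      Prod.mk.injEq, and_true, true_and] at h ⊢
    omega

theorem sum_antidiagonal_reindex_conj (n : ℕ) (G : ℕ → ℕ → ℕ → ℕ → ℕ → ℕ → M) :
    ∑ p ∈ antidiagonal n, ∑ q ∈ antidiagonal p.2, ∑ r ∈ antidiagonal q.2,
      ∑ v ∈ antidiagonal r.2, ∑ u ∈ antidiagonal r.1, G p.1 q.1 u.1 u.2 v.1 v.2 =
    ∑ p ∈ antidiagonal n, ∑ q ∈ antidiagonal p.2, ∑ w ∈ antidiagonal p.1,
      ∑ x ∈ antidiagonal w.2, ∑ y ∈ antidiagonal x.2, G w.1 x.1 y.1 q.1 y.2 q.2 := by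
  simp only [sum_sigma']
  refine sum_nbij'
    (fun a => ⟨(a.1.1 + a.2.1.1 + a.2.2.2.2.1 + a.2.2.2.1.1, a.2.2.2.2.2 + a.2.2.2.1.2),
      (a.2.2.2.2.2, a.2.2.2.1.2), (a.1.1, a.2.1.1 + a.2.2.2.2.1 + a.2.2.2.1.1),
      (a.2.1.1, a.2.2.2.2.1 + a.2.2.2.1.1), (a.2.2.2.2.1, a.2.2.2.1.1)⟩)
    (fun b => ⟨(b.2.2.1.1, b.2.2.2.1.1 + (b.2.2.2.2.1 + b.2.1.1 + (b.2.2.2.2.2 + b.2.1.2))),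
      (b.2.2.2.1.1, b.2.2.2.2.1 + b.2.1.1 + (b.2.2.2.2.2 + b.2.1.2)),
      (b.2.2.2.2.1 + b.2.1.1, b.2.2.2.2.2 + b.2.1.2),
      (b.2.2.2.2.2, b.2.1.2), (b.2.2.2.2.1, b.2.1.1)⟩) ?_ ?_ ?_ ?_
    (fun _ _ => rfl) <;>
  · rintro ⟨⟨_, _⟩, ⟨_, _⟩, ⟨_, _⟩, ⟨_, _⟩, ⟨_, _⟩⟩ h
    simp only [mem_sigma, HasAntidiagonal.mem_antidiagonal, Sigma.mk.injEq, heq_eq_eq,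
      Prod.mk.injEq, and_true, true_and] at h ⊢
    omega

end Reindex

section Sequences

variable {R M : Type*} [CommSemiring R] [AddCommMonoid M] [Module R M]

-- The action of the operator series `∑ U_r ħ^r` on the formal series `∑ f_n ħ^n`.
def applySeries (U : ℕ → M →ₗ[R] M) (f : ℕ → M) : ℕ → M :=
  fun n => ∑ p ∈ antidiagonal n, U p.1 (f p.2)

def deformedMul (B : ℕ → M → M → M) (f g : ℕ → M) : ℕ → M :=
  fun n => ∑ p ∈ antidiagonal n, ∑ q ∈ antidiagonal p.2, B p.1 (f q.1) (g q.2)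

theorem applySeries_single (U : ℕ → M →ₗ[R] M) (a : M) :
    applySeries U (Pi.single 0 a) = fun n => U n a := by
  funext n
  refine (sum_antidiagonal_eq_snd_zero fun p _ hp => ?_).trans (by simp)
  simp [hp]

theorem applySeries_single_of_fixed {U : ℕ → M →ₗ[R] M} {a : M} (h0 : U 0 a = a)
    (h : ∀ r, 1 ≤ r → U r a = 0) : applySeries U (Pi.single 0 a) = Pi.single 0 a := by
  rw [applySeries_single]
  funext n
  rcases n with _ | n
  · simpa using h0
  · simpa using h (n + 1) (by omega)

theorem applySeries_applySeries (U V : ℕ → M →ₗ[R] M) (f : ℕ → M) :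
    applySeries U (applySeries V f) =
      applySeries (fun n => ∑ p ∈ antidiagonal n, (U p.1).comp (V p.2)) f := by
  funext n
  simp only [applySeries, map_sum, LinearMap.sum_apply, LinearMap.comp_apply]
  exact sum_antidiagonal_antidiagonal_assoc n fun i j l => U i (V j (f l))

theorem applySeries_applySeries_of_inverse {U V : ℕ → M →ₗ[R] M}
    (h0 : (U 0).comp (V 0) = LinearMap.id)
    (h : ∀ n, 1 ≤ n → ∑ p ∈ antidiagonal n, (U p.1).comp (V p.2) = 0) (f : ℕ → M) :
    applySeries U (applySeries V f) = f := by
  rw [applySeries_applySeries]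
  funext n
  refine (sum_antidiagonal_eq_fst_zero fun p _ hp => ?_).trans (by simp [h0])
  simp [h p.1 (Nat.one_le_iff_ne_zero.2 hp)]

theorem deformedMul_single_left {B : ℕ → M → M → M} (hB : ∀ i y, B i 0 y = 0) (a : M)
    (g : ℕ → M) (n : ℕ) :
    deformedMul B (Pi.single 0 a) g n = ∑ p ∈ antidiagonal n, B p.1 a (g p.2) :=
  sum_congr rfl fun p _ =>
    (sum_antidiagonal_eq_fst_zero fun q _ hq => by simp [hq, hB]).trans (by simp)

theorem deformedMul_single_right {B : ℕ → M → M → M} (hB : ∀ i x, B i x 0 = 0) (f : ℕ → M)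
    (c : M) (n : ℕ) :
    deformedMul B f (Pi.single 0 c) n = ∑ p ∈ antidiagonal n, B p.1 (f p.2) c :=
  sum_congr rfl fun p _ =>
    (sum_antidiagonal_eq_snd_zero fun q _ hq => by simp [hq, hB]).trans (by simp)

theorem deformedMul_single_single {B : ℕ → M → M → M} (hBl : ∀ i y, B i 0 y = 0)
    (hBr : ∀ i x, B i x 0 = 0) (a b : M) :
    deformedMul B (Pi.single 0 a) (Pi.single 0 b) = fun n => B n a b := by
  funext n
  rw [deformedMul_single_left hBl]
  exact (sum_antidiagonal_eq_snd_zero fun p _ hp => by simp [hp, hBr]).trans (by simp)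

theorem deformedMul_single_unit_left {B : ℕ → M → M → M} (hB : ∀ i y, B i 0 y = 0) {e : M}
    (he0 : ∀ y, B 0 e y = y) (he : ∀ r, 1 ≤ r → ∀ y, B r e y = 0) (g : ℕ → M) :
    deformedMul B (Pi.single 0 e) g = g := by
  funext n
  rw [deformedMul_single_left hB]
  exact (sum_antidiagonal_eq_fst_zero fun p _ hp =>
    he p.1 (Nat.one_le_iff_ne_zero.2 hp) _).trans (he0 _)

theorem deformedMul_single_unit_right {B : ℕ → M → M → M} (hB : ∀ i x, B i x 0 = 0) {e : M}
    (he0 : ∀ x, B 0 x e = x) (he : ∀ r, 1 ≤ r → ∀ x, B r x e = 0) (f : ℕ → M) :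
    deformedMul B f (Pi.single 0 e) = f := by
  funext n
  rw [deformedMul_single_right hB]
  exact (sum_antidiagonal_eq_fst_zero fun p _ hp =>
    he p.1 (Nat.one_le_iff_ne_zero.2 hp) _).trans (he0 _)

theorem sum_antidiagonal_assoc_of_deformedMul_assoc {B : ℕ → M → M → M}
    (hBl : ∀ i y, B i 0 y = 0) (hBr : ∀ i x, B i x 0 = 0)
    (hassoc : ∀ f g h, deformedMul B (deformedMul B f g) h = deformedMul B f (deformedMul B g h))
    (n : ℕ) (a b c : M) :
    ∑ p ∈ antidiagonal n, B p.1 (B p.2 a b) c = ∑ p ∈ antidiagonal n, B p.1 a (B p.2 b c) := by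
  have := congr_fun (hassoc (Pi.single 0 a) (Pi.single 0 b) (Pi.single 0 c)) n
  rwa [deformedMul_single_single hBl hBr, deformedMul_single_right hBr,
    deformedMul_single_single hBl hBr, deformedMul_single_left hBl] at this

theorem deformedMul_assoc {C : ℕ → M →ₗ[R] M →ₗ[R] M}
    (hassoc : ∀ (n : ℕ) (a b c : M),
      ∑ p ∈ antidiagonal n, C p.1 (C p.2 a b) c = ∑ p ∈ antidiagonal n, C p.1 a (C p.2 b c))
    (f g h : ℕ → M) :
    deformedMul (C · · ·) (deformedMul (C · · ·) f g) h =
      deformedMul (C · · ·) f (deformedMul (C · · ·) g h) := by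
  funext n
  simp only [deformedMul, map_sum, LinearMap.sum_apply]
  rw [sum_antidiagonal_reindex_mul_left n fun i j a b c => C i (C j (f a) (g b)) (h c),
    sum_antidiagonal_reindex_mul_right n fun i j a b c => C i (f a) (C j (g b) (h c))]
  exact sum_congr rfl fun w _ => sum_congr rfl fun x _ => sum_congr rfl fun y _ =>
    hassoc w.1 (f x.1) (g y.1) (h y.2)

end Sequences

section Transported

variable (C : ℕ → A →ₗ[k] A →ₗ[k] A) (T S : ℕ → A →ₗ[k] A)

theorem transported_zero_left (n : ℕ) (b : A) : transported C T S n 0 b = 0 := by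
  simp [transported]

theorem transported_zero_right (n : ℕ) (a : A) : transported C T S n a 0 = 0 := by
  simp [transported]

theorem deformedMul_transported (f g : ℕ → A) :
    deformedMul (transported C T S) f g =
      applySeries S (deformedMul (C · · ·) (applySeries T f) (applySeries T g)) := by
  funext n
  simp only [deformedMul, transported, applySeries, map_sum, LinearMap.sum_apply]
  exact (sum_antidiagonal_reindex_conj n
    fun s c t a t' b => S s (C c (T t (f a)) (T t' (g b)))).symm

theorem transported_eq_applySeries (n : ℕ) (a b : A) :
    transported C T S n a b = applySeries S (deformedMul (C · · ·)
      (applySeries T (Pi.single 0 a)) (applySeries T (Pi.single 0 b))) n := by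
  rw [← deformedMul_transported, deformedMul_single_single (transported_zero_left C T S)
    (transported_zero_right C T S)]

theorem deformedMul_transported_assoc
    (hassoc : ∀ (n : ℕ) (a b c : A),
      ∑ p ∈ antidiagonal n, C p.1 (C p.2 a b) c = ∑ p ∈ antidiagonal n, C p.1 a (C p.2 b c))
    (hTS0 : (T 0).comp (S 0) = LinearMap.id)
    (hTS : ∀ n, 1 ≤ n → ∑ p ∈ antidiagonal n, (T p.1).comp (S p.2) = 0) (f g h : ℕ → A) :
    deformedMul (transported C T S) (deformedMul (transported C T S) f g) h =
      deformedMul (transported C T S) f (deformedMul (transported C T S) g h) := by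
  simp only [deformedMul_transported, applySeries_applySeries_of_inverse hTS0 hTS,
    deformedMul_assoc hassoc]

variable {C T S}

theorem transported_one_left (hC0 : ∀ a, C 0 1 a = a) (hCu : ∀ r, 1 ≤ r → ∀ a, C r 1 a = 0)
    (hT0 : T 0 1 = 1) (hT1 : ∀ r, 1 ≤ r → T r 1 = 0) (hST0 : (S 0).comp (T 0) = LinearMap.id)
    (hST : ∀ n, 1 ≤ n → ∑ p ∈ antidiagonal n, (S p.1).comp (T p.2) = 0)
    {r : ℕ} (hr : 1 ≤ r) (a : A) : transported C T S r 1 a = 0 := by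
  rw [transported_eq_applySeries, applySeries_single_of_fixed hT0 hT1,
    deformedMul_single_unit_left (by simp) hC0 hCu, applySeries_applySeries_of_inverse hST0 hST,
    Pi.single_eq_of_ne (by omega)]

theorem transported_one_right (hC0 : ∀ a, C 0 a 1 = a) (hCu : ∀ r, 1 ≤ r → ∀ a, C r a 1 = 0)
    (hT0 : T 0 1 = 1) (hT1 : ∀ r, 1 ≤ r → T r 1 = 0) (hST0 : (S 0).comp (T 0) = LinearMap.id)
    (hST : ∀ n, 1 ≤ n → ∑ p ∈ antidiagonal n, (S p.1).comp (T p.2) = 0)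
    {r : ℕ} (hr : 1 ≤ r) (a : A) : transported C T S r a 1 = 0 := by
  rw [transported_eq_applySeries, applySeries_single_of_fixed hT0 hT1,
    deformedMul_single_unit_right (by simp) hC0 hCu, applySeries_applySeries_of_inverse hST0 hST,
    Pi.single_eq_of_ne (by omega)]

end Transported

/-- Transporting a unital formal associative deformation `(C_r)` of a
unital `k`-algebra `A` along an equivalence transformation `T` (with `T₀ = id`,
`T_r(1) = 0` for `r ≥ 1`, and convolution inverse `S`) yields again a unital formal
associative deformation `(C'_r)` with the same zeroth-order term. -/
theorem transported_deformation_is_unital_deformation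
    (C : ℕ → A →ₗ[k] A →ₗ[k] A)
    (hC0 : ∀ a b : A, C 0 a b = a * b)
    (hassoc : ∀ (n : ℕ) (a b c : A),
      ∑ p ∈ antidiagonal n, C p.1 (C p.2 a b) c =
      ∑ p ∈ antidiagonal n, C p.1 a (C p.2 b c))
    (hCu : ∀ r : ℕ, 1 ≤ r → ∀ a : A, C r 1 a = 0 ∧ C r a 1 = 0)
    (T S : ℕ → A →ₗ[k] A)
    (hT0 : T 0 = LinearMap.id) (hT1 : ∀ r : ℕ, 1 ≤ r → T r 1 = 0)
    (hS0 : S 0 = LinearMap.id)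
    (hTS : ∀ n : ℕ, 1 ≤ n → ∑ p ∈ antidiagonal n, (T p.1).comp (S p.2) = 0)
    (hST : ∀ n : ℕ, 1 ≤ n → ∑ p ∈ antidiagonal n, (S p.1).comp (T p.2) = 0) :
    (∀ a b : A, transported C T S 0 a b = a * b) ∧
    (∀ (n : ℕ) (a b c : A),
      ∑ p ∈ antidiagonal n, transported C T S p.1 (transported C T S p.2 a b) c =
      ∑ p ∈ antidiagonal n, transported C T S p.1 a (transported C T S p.2 b c)) ∧
    (∀ r : ℕ, 1 ≤ r → ∀ a : A,
      transported C T S r 1 a = 0 ∧ transported C T S r a 1 = 0) := by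
  have hT01 : T 0 1 = 1 := by rw [hT0, LinearMap.id_apply]
  have hST0 : (S 0).comp (T 0) = LinearMap.id := by rw [hS0, hT0, LinearMap.id_comp]
  refine ⟨fun a b => by simp [transported, hT0, hS0, hC0], ?_, fun r hr a => ⟨?_, ?_⟩⟩
  · exact sum_antidiagonal_assoc_of_deformedMul_assoc (transported_zero_left C T S)
      (transported_zero_right C T S) (deformedMul_transported_assoc C T S hassoc
        (by rw [hT0, hS0, LinearMap.id_comp]) hTS)
  · exact transported_one_left (fun a => by rw [hC0, one_mul]) (fun r hr a => (hCu r hr a).1)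
      hT01 hT1 hST0 hST hr a
  · exact transported_one_right (fun a => by rw [hC0, mul_one]) (fun r hr a => (hCu r hr a).2)
      hT01 hT1 hST0 hST hr a
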